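/- arXiv:1901.02312 — 4 statements merged into one kernel-verified Lean document; each statement's English description precedes it below -/
import Mathlib

section
/- Let R₈, R₉', R₁₅ be real numbers with R₉' > 0, R₁₅/R₉' > 1/6, and R₈R₁₅/R₉'² < 1/36. Then the function x ↦ −R₈ + R₁₅/2 − (3R₁₅ + R₉')/x − (9R₁₅)/(2x²), defined for x < 0, attains its maximum over x ∈ (−∞, −1] at x = −9R₁₅/(3R₁₅ + R₉'), and the maximal value equals R₁₅ − R₈ + R₉'/3 + R₉'²/(18 R₁₅). -/
/-- Under R₉' > 0, R₁₅/R₉' > 1/6 and R₈R₁₅/R₉'² < 1/36, the function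
x ↦ −R₈ + R₁₅/2 − (3R₁₅ + R₉')/x − 9R₁₅/(2x²) attains its maximum over
x ∈ (−∞, −1] at x₀ = −9R₁₅/(3R₁₅ + R₉'), with maximal value
R₁₅ − R₈ + R₉'/3 + R₉'²/(18R₁₅). -/
theorem stmt3 (R₈ R₉' R₁₅ : ℝ) (h9 : 0 < R₉')
    (h15 : R₁₅ / R₉' > 1 / 6) (h815 : R₈ * R₁₅ / R₉' ^ 2 < 1 / 36) :
    let f : ℝ → ℝ := fun x => -R₈ + R₁₅ / 2 - (3 * R₁₅ + R₉') / x
      - 9 * R₁₅ / (2 * x ^ 2)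
    let x₀ : ℝ := -(9 * R₁₅) / (3 * R₁₅ + R₉')
    x₀ ≤ -1 ∧ (∀ x ≤ (-1 : ℝ), f x ≤ f x₀) ∧
      f x₀ = R₁₅ - R₈ + R₉' / 3 + R₉' ^ 2 / (18 * R₁₅) := by
  intro f x₀
  have hR : R₉' < 6 * R₁₅ := by
    have := (div_lt_div_iff₀ (by norm_num) h9).mp h15
    linarith
  have h15pos : 0 < R₁₅ := by linarith
  have ha : 0 < 3 * R₁₅ + R₉' := by linarith
  have hane : (3 * R₁₅ + R₉') ≠ 0 := ne_of_gt ha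
  have h15ne : R₁₅ ≠ 0 := ne_of_gt h15pos
  have hfx0 : f x₀ = R₁₅ - R₈ + R₉' / 3 + R₉' ^ 2 / (18 * R₁₅) := by
    show -R₈ + R₁₅ / 2 - (3 * R₁₅ + R₉') / x₀ - 9 * R₁₅ / (2 * x₀ ^ 2)
        = R₁₅ - R₈ + R₉' / 3 + R₉' ^ 2 / (18 * R₁₅)
    show -R₈ + R₁₅ / 2 - (3 * R₁₅ + R₉') / (-(9 * R₁₅) / (3 * R₁₅ + R₉'))
        - 9 * R₁₅ / (2 * (-(9 * R₁₅) / (3 * R₁₅ + R₉')) ^ 2)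
        = R₁₅ - R₈ + R₉' / 3 + R₉' ^ 2 / (18 * R₁₅)
    field_simp
    ring
  refine ⟨?_, ?_, hfx0⟩
  · show -(9 * R₁₅) / (3 * R₁₅ + R₉') ≤ -1
    rw [div_le_iff₀ ha]
    linarith
  · intro x hx
    have hxne : x ≠ 0 := by intro h; rw [h] at hx; linarith
    have key : f x = f x₀ - (9 * R₁₅ / 2) * (1 / x + (3 * R₁₅ + R₉') / (9 * R₁₅)) ^ 2 := by
      rw [hfx0]
      show -R₈ + R₁₅ / 2 - (3 * R₁₅ + R₉') / x - 9 * R₁₅ / (2 * x ^ 2)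
          = R₁₅ - R₈ + R₉' / 3 + R₉' ^ 2 / (18 * R₁₅)
          - (9 * R₁₅ / 2) * (1 / x + (3 * R₁₅ + R₉') / (9 * R₁₅)) ^ 2
      field_simp
      ring
    rw [key]
    nlinarith [sq_nonneg (1 / x + (3 * R₁₅ + R₉') / (9 * R₁₅))]
end

section
/- For all u ∈ (3/4, 1] and v ∈ [0, 1], with a₁ = 3u + (7+u)v and b₁ = 4u(4 − 37v + 9v²), one has a₁ + √(max(a₁² + b₁, 0)) ≥ u(8 − 2v). -/
/-- For u ∈ (3/4, 1] and v ∈ [0,1], with a₁ = 3u + (7+u)v and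
b₁ = 4u(4 − 37v + 9v²), one has a₁ + √(max(a₁² + b₁, 0)) ≥ u(8 − 2v). -/
theorem stmt11 (u v : ℝ) (hu : u ∈ Set.Ioc (3 / 4 : ℝ) 1)
    (hv : v ∈ Set.Icc (0 : ℝ) 1) :
    (3 * u + (7 + u) * v)
      + Real.sqrt (max ((3 * u + (7 + u) * v) ^ 2
          + 4 * u * (4 - 37 * v + 9 * v ^ 2)) 0)
      ≥ u * (8 - 2 * v) := by
  obtain ⟨hu1, hu2⟩ := hu
  obtain ⟨hv1, hv2⟩ := hv
  set a := 3 * u + (7 + u) * v with ha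
  set X := a ^ 2 + 4 * u * (4 - 37 * v + 9 * v ^ 2) with hX
  by_cases ht : u * (8 - 2 * v) - a ≤ 0
  · have := Real.sqrt_nonneg (max X 0)
    linarith
  · push_neg at ht
    set t := u * (8 - 2 * v) - a with htdef
    -- from t > 0 deduce v < 1/2
    have hv' : v < 1 / 2 := by nlinarith
    have hkey : X - t ^ 2 = u * (1 - u) * (4 * (1 - 2 * v) * (4 - v)) := by
      simp only [hX, htdef, ha]; ring
    have hpos : 0 ≤ u * (1 - u) * (4 * (1 - 2 * v) * (4 - v)) := by
      have : (0:ℝ) ≤ u := by linarith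
      apply mul_nonneg (mul_nonneg this (by linarith))
      apply mul_nonneg (by linarith) (by linarith)
    have hX2 : t ^ 2 ≤ X := by linarith
    have : t ≤ Real.sqrt (max X 0) := by
      have h0 : t ≤ Real.sqrt (t ^ 2) := by
        rw [Real.sqrt_sq ht.le]
      exact h0.trans (Real.sqrt_le_sqrt (le_max_of_le_left hX2))
    linarith
end

section
/- Let Ω > 0 and define the family of points (ρ₁,₁₆, ρ₂,₁₅, ρ₄,₁₃) = (Ω(cos 4φ − μ)/(1+μ), Ω(cos 2φ + μ)/(1+μ), Ω(1−μ)/(1+μ)) for μ ≥ 0 and cos 2φ ≥ 0. Then every such point satisfies the equation |ρ₂,₁₅|/Ω = (1/2)(1 − ρ₄,₁₃/Ω + √((1 + ρ₄,₁₃/Ω)(1 + ρ₁,₁₆/Ω))). -/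
/-- The separable mixtures (ϱ₊(φ) + μϱ₋(π/2))/(1+μ) achieve the boundary surface
of criterion III: with ρ₁₁₆ = Ω(cos4φ−μ)/(1+μ), ρ₂₁₅ = Ω(cos2φ+μ)/(1+μ),
ρ₄₁₃ = Ω(1−μ)/(1+μ), one has
|ρ₂₁₅|/Ω = (1/2)(1 − ρ₄₁₃/Ω + √((1 + ρ₄₁₃/Ω)(1 + ρ₁₁₆/Ω))). -/
theorem stmt12 (Ω φ μ : ℝ) (hΩ : 0 < Ω) (hμ : 0 ≤ μ)
    (hc : 0 ≤ Real.cos (2 * φ)) :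
    let ρ116 := Ω * (Real.cos (4 * φ) - μ) / (1 + μ)
    let ρ215 := Ω * (Real.cos (2 * φ) + μ) / (1 + μ)
    let ρ413 := Ω * (1 - μ) / (1 + μ)
    |ρ215| / Ω = (1 / 2) * (1 - ρ413 / Ω
      + Real.sqrt ((1 + ρ413 / Ω) * (1 + ρ116 / Ω))) := by
  intro ρ116 ρ215 ρ413
  set c := Real.cos (2 * φ) with hcdef
  have h4 : Real.cos (4 * φ) = 2 * c ^ 2 - 1 := by
    have : (4 : ℝ) * φ = 2 * (2 * φ) := by ring
    rw [this, Real.cos_two_mul]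
  have hμ1 : (0:ℝ) < 1 + μ := by linarith
  have hne : (1 + μ) ≠ 0 := ne_of_gt hμ1
  have hΩne : Ω ≠ 0 := ne_of_gt hΩ
  have habs : |ρ215| = ρ215 := abs_of_nonneg (by
    show 0 ≤ Ω * (c + μ) / (1 + μ)
    positivity)
  have harg : (1 + ρ413 / Ω) * (1 + ρ116 / Ω) = (2 * c / (1 + μ)) ^ 2 := by
    show (1 + Ω * (1 - μ) / (1 + μ) / Ω) * (1 + Ω * (Real.cos (4*φ) - μ) / (1 + μ) / Ω)
        = (2 * c / (1 + μ)) ^ 2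
    rw [h4]; field_simp; ring
  rw [habs, harg, Real.sqrt_sq (by positivity)]
  show Ω * (c + μ) / (1 + μ) / Ω
      = (1/2) * (1 - Ω * (1 - μ) / (1 + μ) / Ω + 2 * c / (1 + μ))
  field_simp; ring
end

section
/- Let u ∈ (0,1]. The line α = u(6 + 2v) and the curve α = a₂ − √(a₂² − b₂), where a₂ = 4u + (7−u)v and b₂ = 4u(3v+2)², intersect at v₃ = (4−3u)/(1+u), with common value α = 14u/(1+u); moreover a₂ − √(a₂² − b₂) ≥ u(6+2v) for v ≥ v₃ (whenever a₂² ≥ b₂). -/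
/-- The line α = u(6+2v) and the curve α = a₂ − √(a₂² − b₂) (a₂ = 4u + (7−u)v,
b₂ = 4u(3v+2)²) intersect at v₃ = (4−3u)/(1+u), with common value 14u/(1+u);
moreover a₂ − √(a₂² − b₂) ≥ u(6+2v) for v ≥ v₃ whenever a₂² ≥ b₂. -/
theorem stmt18 (u : ℝ) (hu : u ∈ Set.Ioc (0 : ℝ) 1) :
    let a₂ : ℝ → ℝ := fun v => 4 * u + (7 - u) * v
    let b₂ : ℝ → ℝ := fun v => 4 * u * (3 * v + 2) ^ 2
    let v₃ : ℝ := (4 - 3 * u) / (1 + u)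
    (a₂ v₃ - Real.sqrt ((a₂ v₃) ^ 2 - b₂ v₃) = u * (6 + 2 * v₃)) ∧
    u * (6 + 2 * v₃) = 14 * u / (1 + u) ∧
    (∀ v : ℝ, v₃ ≤ v → b₂ v ≤ (a₂ v) ^ 2 →
      u * (6 + 2 * v) ≤ a₂ v - Real.sqrt ((a₂ v) ^ 2 - b₂ v)) := by
  obtain ⟨hu0, hu1⟩ := hu
  intro a₂ b₂ v₃
  have h1u : (0:ℝ) < 1 + u := by linarith
  have hL : a₂ v₃ - u * (6 + 2 * v₃) = 7 * (1 - u) * (4 - u) / (1 + u) := by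
    simp only [a₂, v₃]; field_simp; ring
  have hnn : 0 ≤ a₂ v₃ - u * (6 + 2 * v₃) := by
    rw [hL]
    apply div_nonneg _ h1u.le
    nlinarith
  have hsq : (a₂ v₃) ^ 2 - b₂ v₃ = (a₂ v₃ - u * (6 + 2 * v₃)) ^ 2 := by
    simp only [a₂, b₂, v₃]; field_simp; ring
  have hhalf : (1:ℝ)/2 ≤ v₃ := by
    rw [le_div_iff₀ h1u]; linarith
  refine ⟨?_, ?_, ?_⟩
  · rw [hsq, Real.sqrt_sq hnn]; ring
  · simp only [v₃]; field_simp; ring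
  · intro v hv hb
    have hLnn : 0 ≤ a₂ v - u * (6 + 2 * v) := by
      have heq : a₂ v - u * (6 + 2 * v)
          = (a₂ v₃ - u * (6 + 2 * v₃)) + (7 - 3 * u) * (v - v₃) := by
        simp only [a₂]; ring
      rw [heq]
      exact add_nonneg hnn (mul_nonneg (by linarith) (by linarith))
    have key : b₂ v - (2 * (a₂ v) * (u * (6 + 2 * v)) - (u * (6 + 2 * v)) ^ 2)
        = 4 * u * ((1 + u) * (v - v₃)) * (2 * v - 1) := by
      simp only [a₂, b₂, v₃]; field_simp; ring
    have hq : 0 ≤ b₂ v - (2 * (a₂ v) * (u * (6 + 2 * v)) - (u * (6 + 2 * v)) ^ 2) := by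
      rw [key]
      exact mul_nonneg (mul_nonneg (by linarith)
        (mul_nonneg h1u.le (by linarith))) (by linarith)
    have hsle : Real.sqrt ((a₂ v) ^ 2 - b₂ v) ≤ a₂ v - u * (6 + 2 * v) := by
      have h1 : (a₂ v) ^ 2 - b₂ v ≤ (a₂ v - u * (6 + 2 * v)) ^ 2 := by nlinarith
      calc Real.sqrt ((a₂ v) ^ 2 - b₂ v) ≤ Real.sqrt ((a₂ v - u * (6 + 2 * v)) ^ 2) :=
            Real.sqrt_le_sqrt h1
        _ = a₂ v - u * (6 + 2 * v) := Real.sqrt_sq hLnn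
    linarith
end
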